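/- Let G be a finite simple graph and u a vertex such that the configuration which is 'on' at every vertex except u (i.e., 1 + c_u, where c_u is the indicator of u) is solvable. Then every pattern p with Np = 1 + c_u satisfies p(u) = 0. -/

import Mathlib

/-! Over GF(2) the quadratic form `p ⬝ᵥ N *ᵥ p` of a symmetric matrix only sees the diagonal,
since each off-diagonal term appears twice; as `N` has unit diagonal and `x ^ 2 = x` in GF(2),
`p ⬝ᵥ N *ᵥ p = ∑ i, p i`. If `N *ᵥ p = 1 + c_u`, the same form equals `∑ i, p i + p u`,
so `p u = 0`. -/

open scoped Classical

/-- Closed adjacency matrix of a simple graph over GF(2): entry (i,j) is 1 iff i = j or i ~ j. -/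
noncomputable def closedAdj {V : Type*} [Fintype V] (G : SimpleGraph V) :
    Matrix V V (ZMod 2) :=
  Matrix.of fun i j => if i = j ∨ G.Adj i j then 1 else 0

/-- Nullity ν(G): dimension over GF(2) of the kernel of the closed adjacency matrix. -/
noncomputable def nu {V : Type*} [Fintype V] (G : SimpleGraph V) : ℕ :=
  Module.finrank (ZMod 2) (LinearMap.ker (closedAdj G).mulVecLin)

open Finset Matrix

theorem Finset.sum_sum_eq_sum_diag_of_symm {ι R : Type*} [Fintype ι] [Ring R] [CharP R 2]
    (f : ι → ι → R) (hf : ∀ i j, f i j = f j i) :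
    ∑ i, ∑ j, f i j = ∑ i, f i i := by
  have hsplit : ∑ i, ∑ j, f i j = ∑ i, ∑ j, (if i = j then f i j else 0) +
      ∑ q : ι × ι, if q.1 = q.2 then 0 else f q.1 q.2 := by
    rw [Fintype.sum_prod_type' fun i j => if i = j then 0 else f i j, ← sum_add_distrib]
    refine sum_congr rfl fun i _ => ?_
    rw [← sum_add_distrib]
    exact sum_congr rfl fun j _ => by split_ifs <;> simp
  have hoff : ∑ q : ι × ι, (if q.1 = q.2 then 0 else f q.1 q.2) = 0 := by
    refine sum_ninvolution Prod.swap (fun q => ?_) (fun q hq hswap => ?_) (fun _ => mem_univ _)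
      Prod.swap_swap
    · by_cases h : q.1 = q.2
      · simp [h]
      · simp only [Prod.fst_swap, Prod.snd_swap, h, Ne.symm h, if_false, hf q.2 q.1,
          CharTwo.add_self_eq_zero]
    · simp [(congrArg Prod.fst hswap).symm] at hq
  simp [hsplit, hoff]

theorem Matrix.dotProduct_mulVec_self_of_isSymm {ι R : Type*} [Fintype ι] [CommRing R]
    [CharP R 2] {A : Matrix ι ι R} (hA : A.IsSymm) (x : ι → R) :
    x ⬝ᵥ A *ᵥ x = ∑ i, A i i * x i ^ 2 := by
  simp only [dotProduct, mulVec, mul_sum]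
  rw [sum_sum_eq_sum_diag_of_symm _ fun i j => by rw [hA.apply i j]; ring]
  exact sum_congr rfl fun i _ => by ring

theorem closedAdj_isSymm {V : Type*} [Fintype V] (G : SimpleGraph V) :
    (closedAdj G).IsSymm :=
  IsSymm.ext fun i j => by simp only [closedAdj, of_apply, eq_comm, G.adj_comm]

@[simp]
theorem closedAdj_apply_self {V : Type*} [Fintype V] (G : SimpleGraph V) (i : V) :
    closedAdj G i i = 1 := by
  simp [closedAdj]

theorem dotProduct_closedAdj_mulVec_self {V : Type*} [Fintype V] (G : SimpleGraph V)
    (p : V → ZMod 2) : p ⬝ᵥ closedAdj G *ᵥ p = p ⬝ᵥ 1 := by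
  rw [dotProduct_mulVec_self_of_isSymm (closedAdj_isSymm G), dotProduct_one]
  simp [ZMod.pow_card]

theorem not_activated_of_solves_all_ones_except_general {V : Type*} [Fintype V]
    (G : SimpleGraph V) (u : V) :
    ∀ p : V → ZMod 2, (closedAdj G).mulVec p = 1 + Pi.single u 1 → p u = 0 := by
  intro p hp
  have h := dotProduct_closedAdj_mulVec_self G p
  rw [hp, dotProduct_add, dotProduct_single, mul_one] at h
  exact add_eq_left.mp h

theorem not_activated_of_solves_all_ones_except {V : Type*} [Fintype V]
    (G : SimpleGraph V) (u : V)
    (hsolv : ∃ p : V → ZMod 2, (closedAdj G).mulVec p = 1 + Pi.single u 1) :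
    ∀ p : V → ZMod 2, (closedAdj G).mulVec p = 1 + Pi.single u 1 → p u = 0 :=
  not_activated_of_solves_all_ones_except_general G u
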